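/- Assume d^* < ∞. (a) If sup_k (1/d_k)∫_{Δ_k} q_−(x) dx < ∞, then the Neumann form t_{X,q} is lower semibounded: there exists C ≥ 0 with t_{X,q}[f] ≥ −C ∫₀^∞ |f|² dx for all f in its domain. (b) Conversely, if q(x) ≤ 0 for a.e. x and there exists C ≥ 0 with t_{X,q}[f] ≥ −C ∫₀^∞ |f|² dx for all f in the domain of t_{X,q}, then sup_k (1/d_k)∫_{Δ_k} q_−(x) dx < ∞. -/

import Mathlib

open MeasureTheory Set Filter

noncomputable section

/-- A function that is *piecewise `H¹`* with respect to the partition points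
`x 0 < x 1 < x 2 < ⋯` of `[0,∞)`: on each interval `Δ_{k+1} = [x k, x (k+1)]` it is
absolutely continuous with derivative `f' ∈ L²`, encoded via the fundamental
theorem of calculus; `fr k = f(x k +)` and `fl (k+1) = f(x (k+1) −)` are the
one-sided limits at the nodes. -/
structure PW1 (x : ℕ → ℝ) where
  f : ℝ → ℝ
  f' : ℝ → ℝ
  fr : ℕ → ℝ
  fl : ℕ → ℝ
  int_d : ∀ k, IntegrableOn f' (Icc (x k) (x (k + 1))) volume
  sq_d : ∀ k, IntegrableOn (fun t => f' t ^ 2) (Icc (x k) (x (k + 1))) volume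
  ftc : ∀ k, ∀ t ∈ Ioo (x k) (x (k + 1)), f t = fr k + ∫ s in Ioc (x k) t, f' s
  fl_eq : ∀ k, fl (k + 1) = fr k + ∫ s in Ioc (x k) (x (k + 1)), f' s

/-- The jump `f(x_{k+1}+) − f(x_{k+1}−)` of a piecewise `H¹` function at the
interior node `x (k+1)` (the paper's node `x_{k+1}`). -/
def PW1.jump {x : ℕ → ℝ} (F : PW1 x) (k : ℕ) : ℝ := F.fr (k + 1) - F.fl (k + 1)

/-- Membership in the domain of the form `t_{X,β,q}`: `f ∈ L²(0,∞)`,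
`∫₀^∞ |f'|² < ∞`, `∫₀^∞ |q| |f|² < ∞` and `Σ_k |f(x_k+) − f(x_k−)|²/|β_k| < ∞`. -/
def MemDom (x : ℕ → ℝ) (q : ℝ → ℝ) (β : ℕ → ℝ) (F : PW1 x) : Prop :=
  IntegrableOn (fun t => F.f t ^ 2) (Ioi 0) volume ∧
  IntegrableOn (fun t => F.f' t ^ 2) (Ioi 0) volume ∧
  IntegrableOn (fun t => |q t| * F.f t ^ 2) (Ioi 0) volume ∧
  Summable (fun k => F.jump k ^ 2 / |β (k + 1)|)

/-- The value of the quadratic form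
`t_{X,β,q}[f] = ∫₀^∞ (|f'|² + q |f|²) dx + Σ_k |f(x_k+) − f(x_k−)|²/β_k`. -/
def formVal (x : ℕ → ℝ) (q : ℝ → ℝ) (β : ℕ → ℝ) (F : PW1 x) : ℝ :=
  (∫ t in Ioi (0 : ℝ), (F.f' t ^ 2 + q t * F.f t ^ 2)) +
    ∑' k, F.jump k ^ 2 / β (k + 1)


/-- Membership in the domain of the Neumann form `t_{X,q}`: `f ∈ L²(0,∞)`,
`∫₀^∞ |f'|² < ∞` and `∫₀^∞ |q| |f|² < ∞`. -/
def MemDomN (x : ℕ → ℝ) (q : ℝ → ℝ) (F : PW1 x) : Prop :=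
  IntegrableOn (fun t => F.f t ^ 2) (Ioi 0) volume ∧
  IntegrableOn (fun t => F.f' t ^ 2) (Ioi 0) volume ∧
  IntegrableOn (fun t => |q t| * F.f t ^ 2) (Ioi 0) volume

/-- The value of the Neumann form `t_{X,q}[f] = ∫₀^∞ (|f'|² + q |f|²) dx`. -/
def formValN (x : ℕ → ℝ) (q : ℝ → ℝ) (F : PW1 x) : ℝ :=
  ∫ t in Ioi (0 : ℝ), (F.f' t ^ 2 + q t * F.f t ^ 2)

/-!
On an interval of length `d`, the fundamental theorem of calculus and Cauchy–Schwarz give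
`f(t)² ≤ (2/ε) ∫ f² + 2ε ∫ f'²` for every `0 < ε ≤ d` (average `f(t)² ≤ 2 f(s)² + 2 (f(t) - f(s))²`
over `s` in a window of length `ε` around `t`). Integrating against `q₋`, whose mass on `Δ_k` is at
most `C₀ d_k ≤ C₀ d^*`, and taking `ε = d_k / (2 C₀ (d^*)² + 1)` absorbs the derivative term, so
`∫_{Δ_k} (f'² + q f²) ≥ -C ∫_{Δ_k} f²` with `C` independent of `k`; summing over `k` gives (a).
For (b), test the form on the indicator of `Δ_k`: its form value is `∫_{Δ_k} q = -∫_{Δ_k} q₋`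
and its squared norm is `d_k`.
-/

theorem sq_setIntegral_le_measureReal_mul {α : Type*} [MeasurableSpace α] {μ : Measure α}
    {s : Set α} (hs : μ s ≠ ⊤) {g : α → ℝ} (hg : IntegrableOn g s μ)
    (hg2 : IntegrableOn (fun t => g t ^ 2) s μ) :
    (∫ t in s, g t ∂μ) ^ 2 ≤ μ.real s * ∫ t in s, g t ^ 2 ∂μ := by
  rcases eq_or_ne (μ s) 0 with h0 | h0
  · simp [Measure.restrict_eq_zero.2 h0]
  have hpos : 0 < μ.real s := ENNReal.toReal_pos h0 hs
  have jensen := even_two.convexOn_pow.map_set_average_le (continuous_pow 2).continuousOn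
    isClosed_univ h0 hs (by simp) hg hg2
  simp only [setAverage_eq, smul_eq_mul, mul_pow] at jensen
  have := mul_le_mul_of_nonneg_left jensen (sq_nonneg (μ.real s))
  field_simp at this
  linarith

section FTC

variable {a b c : ℝ} {f g : ℝ → ℝ}

theorem sub_eq_setIntegral_of_ftc (hftc : ∀ t ∈ Ioo a b, f t = c + ∫ u in Ioc a t, g u)
    (hg : IntegrableOn g (Icc a b)) {s t : ℝ} (hs : s ∈ Ioo a b) (ht : t ∈ Ioo a b)
    (hst : s ≤ t) : f t - f s = ∫ u in Ioc s t, g u := by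
  have hIcc : Ioc a t ⊆ Icc a b := Ioc_subset_Icc_self.trans (Icc_subset_Icc le_rfl ht.2.le)
  rw [hftc t ht, hftc s hs, ← Ioc_union_Ioc_eq_Ioc hs.1.le hst,
    setIntegral_union (Ioc_disjoint_Ioc_of_le le_rfl) measurableSet_Ioc
      (hg.mono_set ((Ioc_subset_Ioc_right hst).trans hIcc))
      (hg.mono_set ((Ioc_subset_Ioc_left hs.1.le).trans hIcc))]
  ring

theorem sub_sq_le_of_ftc (hftc : ∀ t ∈ Ioo a b, f t = c + ∫ u in Ioc a t, g u)
    (hg : IntegrableOn g (Icc a b)) (hg2 : IntegrableOn (fun t => g t ^ 2) (Icc a b))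
    {p p' s t : ℝ} (hap : a ≤ p) (hpb : p' ≤ b) (hs : s ∈ Ioo a b ∩ Icc p p')
    (ht : t ∈ Ioo a b ∩ Icc p p') :
    (f t - f s) ^ 2 ≤ (p' - p) * ∫ u in Ioc p p', g u ^ 2 := by
  wlog hst : s ≤ t generalizing s t
  · rw [← neg_sub, neg_sq]
    exact this ht hs (le_of_not_ge hst)
  have hsub : Ioc s t ⊆ Ioc p p' := Ioc_subset_Ioc hs.2.1 ht.2.2
  have hIcc : Ioc p p' ⊆ Icc a b := Ioc_subset_Icc_self.trans (Icc_subset_Icc hap hpb)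
  rw [sub_eq_setIntegral_of_ftc hftc hg hs.1 ht.1 hst]
  calc (∫ u in Ioc s t, g u) ^ 2 ≤ (t - s) * ∫ u in Ioc s t, g u ^ 2 := by
        simpa [hst] using sq_setIntegral_le_measureReal_mul measure_Ioc_lt_top.ne
          (hg.mono_set (hsub.trans hIcc)) (hg2.mono_set (hsub.trans hIcc))
    _ ≤ (p' - p) * ∫ u in Ioc p p', g u ^ 2 := by
        refine mul_le_mul (by linarith [hs.2.1, ht.2.2]) ?_
          (integral_nonneg fun _ => sq_nonneg _) (by linarith [hs.2.1, ht.2.2])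
        exact setIntegral_mono_set (hg2.mono_set hIcc) (.of_forall fun _ => sq_nonneg _)
          hsub.eventuallyLE

theorem sq_le_of_ftc (hftc : ∀ t ∈ Ioo a b, f t = c + ∫ u in Ioc a t, g u)
    (hg : IntegrableOn g (Icc a b)) (hg2 : IntegrableOn (fun t => g t ^ 2) (Icc a b))
    (hf2 : IntegrableOn (fun t => f t ^ 2) (Ioo a b)) {ε : ℝ} (hε : 0 < ε) (hεab : ε ≤ b - a)
    {t : ℝ} (ht : t ∈ Ioo a b) :
    f t ^ 2 ≤ 2 / ε * (∫ u in Ioo a b, f u ^ 2) + 2 * ε * ∫ u in Ioo a b, g u ^ 2 := by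
  -- a window of length `ε` inside `(a, b)` containing `t`
  set p := min t (b - ε)
  have hap : a ≤ p := le_min ht.1.le (by linarith)
  have hpb : p + ε ≤ b := by have := min_le_right t (b - ε); linarith
  have htJ : t ∈ Ioo a b ∩ Icc p (p + ε) :=
    ⟨ht, min_le_left _ _, by rcases min_cases t (b - ε) with h | h <;> linarith [ht.2]⟩
  have hJ : Ioo p (p + ε) ⊆ Ioo a b := Ioo_subset_Ioo hap hpb
  have hG : ∫ u in Ioc p (p + ε), g u ^ 2 ≤ ∫ u in Ioo a b, g u ^ 2 := by
    rw [← integral_Icc_eq_integral_Ioo]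
    exact setIntegral_mono_set hg2 (.of_forall fun _ => sq_nonneg _)
      (Ioc_subset_Icc_self.trans (Icc_subset_Icc hap hpb)).eventuallyLE
  have hpoint : ∀ s ∈ Ioo p (p + ε),
      f t ^ 2 - 2 * ε * ∫ u in Ioo a b, g u ^ 2 ≤ 2 * f s ^ 2 := by
    intro s hs
    have := sub_sq_le_of_ftc hftc hg hg2 hap hpb ⟨hJ hs, Ioo_subset_Icc_self hs⟩ htJ
    rw [add_sub_cancel_left] at this
    nlinarith [sq_nonneg (f t - 2 * f s)]
  have hmean := setIntegral_ge_of_const_le_real measurableSet_Ioo measure_Ioo_lt_top.ne hpoint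
    ((hf2.mono_set hJ).const_mul 2)
  rw [integral_const_mul, Real.volume_real_Ioo_of_le (by linarith), add_sub_cancel_left] at hmean
  have hF : ∫ u in Ioo p (p + ε), f u ^ 2 ≤ ∫ u in Ioo a b, f u ^ 2 :=
    setIntegral_mono_set hf2 (.of_forall fun _ => sq_nonneg _) hJ.eventuallyLE
  rw [div_mul_eq_mul_div, ← sub_le_iff_le_add, le_div_iff₀ hε]
  linarith

theorem setIntegral_mul_sq_le_of_ftc (hftc : ∀ t ∈ Ioo a b, f t = c + ∫ u in Ioc a t, g u)
    (hg : IntegrableOn g (Icc a b)) (hg2 : IntegrableOn (fun t => g t ^ 2) (Icc a b))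
    (hf2 : IntegrableOn (fun t => f t ^ 2) (Ioo a b)) {ε : ℝ} (hε : 0 < ε) (hεab : ε ≤ b - a)
    {Q : ℝ → ℝ} (hQ0 : ∀ t, 0 ≤ Q t) (hQ : IntegrableOn Q (Ioo a b))
    (hQf : IntegrableOn (fun t => Q t * f t ^ 2) (Ioo a b)) :
    ∫ t in Ioo a b, Q t * f t ^ 2 ≤ (∫ t in Ioo a b, Q t) *
      (2 / ε * (∫ u in Ioo a b, f u ^ 2) + 2 * ε * ∫ u in Ioo a b, g u ^ 2) := by
  rw [← integral_mul_const]
  exact setIntegral_mono_on hQf (hQ.mul_const _) measurableSet_Ioo fun t ht =>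
    mul_le_mul_of_nonneg_left (sq_le_of_ftc hftc hg hg2 hf2 hε hεab ht) (hQ0 t)

end FTC

theorem neg_mul_le_setIntegral_of_ftc {a b c C₀ D : ℝ} {f g q : ℝ → ℝ}
    (hftc : ∀ t ∈ Ioo a b, f t = c + ∫ u in Ioc a t, g u)
    (hg : IntegrableOn g (Icc a b)) (hg2 : IntegrableOn (fun t => g t ^ 2) (Icc a b))
    (hf2 : IntegrableOn (fun t => f t ^ 2) (Ioo a b)) (hq : IntegrableOn q (Ioo a b))
    (hqf : IntegrableOn (fun t => q t * f t ^ 2) (Ioo a b)) (hab : a < b) (hbaD : b - a ≤ D)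
    (hC₀ : 0 ≤ C₀) (hmass : ∫ t in Ioo a b, max 0 (-q t) ≤ C₀ * (b - a)) :
    -(2 * C₀ * (2 * C₀ * D ^ 2 + 1)) * ∫ t in Ioo a b, f t ^ 2 ≤
      ∫ t in Ioo a b, (g t ^ 2 + q t * f t ^ 2) := by
  have hd : 0 < b - a := by linarith
  set F := ∫ t in Ioo a b, f t ^ 2
  set G := ∫ t in Ioo a b, g t ^ 2
  have hF : 0 ≤ F := integral_nonneg fun _ => sq_nonneg _
  have hG : 0 ≤ G := integral_nonneg fun _ => sq_nonneg _
  have hK : 0 < 2 * C₀ * D ^ 2 + 1 := by positivity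
  -- the scale `ε` is chosen so that the `g`-term below is absorbed by `∫ g ^ 2`
  set ε := (b - a) / (2 * C₀ * D ^ 2 + 1)
  have hε : 0 < ε := div_pos hd hK
  have hεab : ε ≤ b - a := div_le_self hd.le (by nlinarith [sq_nonneg D])
  have hQf : IntegrableOn (fun t => max 0 (-q t) * f t ^ 2) (Ioo a b) := by
    refine hqf.neg.pos_part.congr (.of_forall fun t => ?_)
    change max (-(q t * f t ^ 2)) 0 = max 0 (-q t) * f t ^ 2
    rw [max_comm, ← neg_mul, max_mul_of_nonneg _ _ (sq_nonneg _), zero_mul]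
  have hweighted := setIntegral_mul_sq_le_of_ftc hftc hg hg2 hf2 hε hεab
    (fun t => le_max_left 0 (-q t))
    (hq.neg.pos_part.congr (.of_forall fun t => max_comm _ _)) hQf
  have hneg : -∫ t in Ioo a b, max 0 (-q t) * f t ^ 2 ≤ ∫ t in Ioo a b, q t * f t ^ 2 := by
    rw [← integral_neg]
    exact setIntegral_mono_on hQf.neg hqf measurableSet_Ioo fun t _ => by
      nlinarith [le_max_right 0 (-q t), sq_nonneg (f t)]
  have hcoefF : C₀ * (b - a) * (2 / ε) = 2 * C₀ * (2 * C₀ * D ^ 2 + 1) := by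
    simp only [ε]
    field_simp
  have hcoefG : C₀ * (b - a) * (2 * ε) ≤ 1 := by
    have : C₀ * (b - a) * (2 * ε) = 2 * C₀ * (b - a) ^ 2 / (2 * C₀ * D ^ 2 + 1) := by
      simp only [ε]
      ring
    rw [this, div_le_one hK]
    have : (b - a) ^ 2 ≤ D ^ 2 := pow_le_pow_left₀ hd.le hbaD 2
    nlinarith
  have hbound : ∫ t in Ioo a b, max 0 (-q t) * f t ^ 2 ≤
      2 * C₀ * (2 * C₀ * D ^ 2 + 1) * F + G := by
    calc _ ≤ (∫ t in Ioo a b, max 0 (-q t)) * (2 / ε * F + 2 * ε * G) := hweighted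
      _ ≤ C₀ * (b - a) * (2 / ε * F + 2 * ε * G) := by gcongr
      _ ≤ 2 * C₀ * (2 * C₀ * D ^ 2 + 1) * F + G := by
        rw [mul_add, ← mul_assoc, ← mul_assoc, hcoefF]
        nlinarith
  rw [integral_add (hg2.mono_set Ioo_subset_Icc_self) hqf]
  linarith

def NeumannFormLowerSemibounded (x : ℕ → ℝ) (q : ℝ → ℝ) : Prop :=
  ∃ C : ℝ, 0 ≤ C ∧ ∀ F : PW1 x, MemDomN x q F →
    formValN x q F ≥ -C * ∫ t in Ioi (0 : ℝ), F.f t ^ 2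

def MeanNegPartBounded (x : ℕ → ℝ) (q : ℝ → ℝ) : Prop :=
  ∃ C₀ : ℝ, ∀ k, (1 / (x (k + 1) - x k)) * (∫ t in Icc (x k) (x (k + 1)), max 0 (-q t)) ≤ C₀

section HalfLine

variable {x : ℕ → ℝ} {q : ℝ → ℝ}

theorem iUnion_Ioc_eq_Ioi_of_tendsto (hmono : Monotone x) (hxtop : Tendsto x atTop atTop) :
    ⋃ k, Ioc (x k) (x (k + 1)) = Ioi (x 0) :=
  iUnion_Ioc_map_succ_eq_Ioi (fun k => hmono k.zero_le) (not_bddAbove_of_tendsto_atTop hxtop)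

theorem hasSum_setIntegral_Ioc (hmono : Monotone x) (hxtop : Tendsto x atTop atTop)
    {h : ℝ → ℝ} (hh : IntegrableOn h (Ioi (x 0))) :
    HasSum (fun k => ∫ t in Ioc (x k) (x (k + 1)), h t) (∫ t in Ioi (x 0), h t) := by
  rw [← iUnion_Ioc_eq_Ioi_of_tendsto hmono hxtop] at hh ⊢
  exact hasSum_integral_iUnion (fun _ => measurableSet_Ioc)
    (by simpa only [Order.succ_eq_add_one] using hmono.pairwise_disjoint_on_Ioc_succ) hh

theorem MemDomN.integrableOn_mul_sq (hmono : Monotone x) (hxtop : Tendsto x atTop atTop)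
    (hx0 : x 0 = 0) (hq : ∀ k, IntegrableOn q (Icc (x k) (x (k + 1)))) {F : PW1 x}
    (hF : MemDomN x q F) : IntegrableOn (fun t => q t * F.f t ^ 2) (Ioi 0) := by
  have hqm : AEStronglyMeasurable q (volume.restrict (Ioi 0)) := by
    rw [← hx0, ← iUnion_Ioc_eq_Ioi_of_tendsto hmono hxtop, aestronglyMeasurable_iUnion_iff]
    exact fun k => ((hq k).mono_set Ioc_subset_Icc_self).aestronglyMeasurable
  exact hF.2.2.mono' (hqm.mul hF.1.aestronglyMeasurable) (.of_forall fun t => by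
    rw [Real.norm_eq_abs, abs_mul, abs_of_nonneg (sq_nonneg (F.f t))])

theorem neumannFormLowerSemibounded_of_meanNegPartBounded (hx0 : x 0 = 0) (hmono : StrictMono x)
    (hxtop : Tendsto x atTop atTop) (hq : ∀ a b : ℝ, 0 ≤ a → IntegrableOn q (Icc a b))
    {D : ℝ} (hD : ∀ k, x (k + 1) - x k ≤ D) (h : MeanNegPartBounded x q) :
    NeumannFormLowerSemibounded x q := by
  obtain ⟨C₀, hC₀⟩ := h
  have hd : ∀ k, 0 < x (k + 1) - x k := fun k => sub_pos.2 (hmono k.lt_succ_self)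
  have hx : ∀ k, 0 ≤ x k := fun k => hx0 ▸ hmono.monotone k.zero_le
  have hqk : ∀ k, IntegrableOn q (Icc (x k) (x (k + 1))) := fun k => hq _ _ (hx k)
  have hmass : ∀ k, ∫ t in Ioo (x k) (x (k + 1)), max 0 (-q t) ≤ C₀ * (x (k + 1) - x k) :=
    fun k => by
      have := hC₀ k
      rwa [integral_Icc_eq_integral_Ioo, one_div, inv_mul_le_iff₀ (hd k), mul_comm] at this
  have hC₀0 : 0 ≤ C₀ :=
    nonneg_of_mul_nonneg_left ((integral_nonneg fun _ => le_max_left _ _).trans (hmass 0)) (hd 0)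
  refine ⟨2 * C₀ * (2 * C₀ * D ^ 2 + 1), by positivity, fun F hF => ?_⟩
  have hsub : ∀ k, Ioc (x k) (x (k + 1)) ⊆ Ioi 0 := fun k t ht => (hx k).trans_lt ht.1
  have hqf := hF.integrableOn_mul_sq hmono.monotone hxtop hx0 hqk
  have hpiece : ∀ k, -(2 * C₀ * (2 * C₀ * D ^ 2 + 1)) * ∫ t in Ioc (x k) (x (k + 1)), F.f t ^ 2
      ≤ ∫ t in Ioc (x k) (x (k + 1)), (F.f' t ^ 2 + q t * F.f t ^ 2) := fun k => by
    simp only [integral_Ioc_eq_integral_Ioo]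
    exact neg_mul_le_setIntegral_of_ftc (F.ftc k) (F.int_d k) (F.sq_d k)
      (hF.1.mono_set (Ioo_subset_Ioc_self.trans (hsub k)))
      ((hqk k).mono_set Ioo_subset_Icc_self) (hqf.mono_set (Ioo_subset_Ioc_self.trans (hsub k)))
      (hmono k.lt_succ_self) (hD k) hC₀0 (hmass k)
  obtain ⟨hf2, hg2, -⟩ := hF
  rw [← hx0] at hf2 hg2 hqf
  rw [formValN, ge_iff_le, ← hx0]
  exact hasSum_le hpiece ((hasSum_setIntegral_Ioc hmono.monotone hxtop hf2).mul_left _)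
    (hasSum_setIntegral_Ioc hmono.monotone hxtop (hg2.add hqf))

def PW1.indicatorIoo (hmono : StrictMono x) (k : ℕ) : PW1 x where
  f := (Ioo (x k) (x (k + 1))).indicator 1
  f' := 0
  fr j := if j = k then 1 else 0
  fl j := if j = k + 1 then 1 else 0
  int_d _ := integrableOn_zero
  sq_d _ := by simp
  ftc j t ht := by
    rcases eq_or_ne j k with rfl | hjk
    · simp [ht]
    · have hdisj := hmono.monotone.pairwise_disjoint_on_Ioo_succ hjk
      simp only [Order.succ_eq_add_one] at hdisj
      simp [hjk, hdisj.notMem_of_mem_left ht]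
  fl_eq j := by simp

theorem mul_indicator_one_sq {α : Type*} (s : Set α) (h : α → ℝ) :
    (fun t => h t * s.indicator 1 t ^ 2) = s.indicator h := by
  ext t
  by_cases ht : t ∈ s <;> simp [ht]

theorem indicatorIoo_sq (hmono : StrictMono x) (k : ℕ) :
    (fun t => (PW1.indicatorIoo hmono k).f t ^ 2) = (Ioo (x k) (x (k + 1))).indicator 1 := by
  simpa [PW1.indicatorIoo] using mul_indicator_one_sq (Ioo (x k) (x (k + 1))) 1

theorem memDomN_indicatorIoo (hmono : StrictMono x) (k : ℕ)
    (hq : IntegrableOn q (Ioo (x k) (x (k + 1)))) : MemDomN x q (PW1.indicatorIoo hmono k) := by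
  refine ⟨?_, by simp [PW1.indicatorIoo], ?_⟩
  · rw [indicatorIoo_sq]
    exact ((integrableOn_const measure_Ioo_lt_top.ne).integrable_indicator
      measurableSet_Ioo).integrableOn
  · change IntegrableOn (fun t => |q t| * (Ioo (x k) (x (k + 1))).indicator 1 t ^ 2) _
    rw [mul_indicator_one_sq _ fun t => |q t|]
    exact (IntegrableOn.integrable_indicator hq.abs measurableSet_Ioo).integrableOn

theorem formValN_indicatorIoo (hmono : StrictMono x) {k : ℕ} (hk : 0 ≤ x k) :
    formValN x q (PW1.indicatorIoo hmono k) = ∫ t in Ioo (x k) (x (k + 1)), q t := by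
  have hsub : Ioo (x k) (x (k + 1)) ⊆ Ioi 0 := fun t ht => hk.trans_lt ht.1
  simp only [formValN, PW1.indicatorIoo, Pi.zero_apply, zero_pow two_ne_zero, zero_add]
  rw [mul_indicator_one_sq, setIntegral_indicator measurableSet_Ioo, inter_eq_right.2 hsub]

theorem integral_sq_indicatorIoo (hmono : StrictMono x) {k : ℕ} (hk : 0 ≤ x k) :
    ∫ t in Ioi (0 : ℝ), (PW1.indicatorIoo hmono k).f t ^ 2 = x (k + 1) - x k := by
  have hsub : Ioo (x k) (x (k + 1)) ⊆ Ioi 0 := fun t ht => hk.trans_lt ht.1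
  rw [indicatorIoo_sq, setIntegral_indicator measurableSet_Ioo, inter_eq_right.2 hsub]
  simp [Real.volume_real_Ioo_of_le (hmono k.lt_succ_self).le]

theorem meanNegPartBounded_of_neumannFormLowerSemibounded (hx0 : x 0 = 0) (hmono : StrictMono x)
    (hq : ∀ a b : ℝ, 0 ≤ a → IntegrableOn q (Icc a b))
    (hq0 : ∀ᵐ t ∂(volume.restrict (Ioi (0 : ℝ))), q t ≤ 0)
    (h : NeumannFormLowerSemibounded x q) : MeanNegPartBounded x q := by
  obtain ⟨C, -, hC⟩ := h
  refine ⟨C, fun k => ?_⟩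
  have hk : 0 ≤ x k := hx0 ▸ hmono.monotone k.zero_le
  have hqk : IntegrableOn q (Ioo (x k) (x (k + 1))) := (hq _ _ hk).mono_set Ioo_subset_Icc_self
  have hlb := hC _ (memDomN_indicatorIoo hmono k hqk)
  rw [formValN_indicatorIoo hmono hk, integral_sq_indicatorIoo hmono hk] at hlb
  have hnegPart :
      ∫ t in Icc (x k) (x (k + 1)), max 0 (-q t) = -∫ t in Ioo (x k) (x (k + 1)), q t := by
    rw [integral_Icc_eq_integral_Ioo, ← integral_neg]
    refine integral_congr_ae ?_
    filter_upwards [ae_restrict_of_ae_restrict_of_subset (fun t ht => hk.trans_lt ht.1) hq0]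
      with t ht
    exact max_eq_right (neg_nonneg.2 ht)
  rw [hnegPart, one_div, inv_mul_le_iff₀ (sub_pos.2 (hmono k.lt_succ_self))]
  linarith

end HalfLine

/-- **Corollary 2.6**: assume `d^* < ∞`. (a) If `sup_k (1/d_k) ∫_Δₖ q₋ < ∞`,
then the Neumann form `t_{X,q}` is lower semibounded. (b) Conversely, if
`q ≤ 0` a.e. and `t_{X,q}` is lower semibounded, then
`sup_k (1/d_k) ∫_Δₖ q₋ < ∞`. -/
theorem stmt_5 (x : ℕ → ℝ) (hx0 : x 0 = 0) (hmono : StrictMono x)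
    (hxtop : Tendsto x atTop atTop)
    (q : ℝ → ℝ) (hq : ∀ a b : ℝ, 0 ≤ a → IntegrableOn q (Icc a b) volume)
    (D : ℝ) (hD : ∀ k, x (k + 1) - x k ≤ D) :
    ((∃ C₀ : ℝ, ∀ k, (1 / (x (k + 1) - x k)) *
        (∫ t in Icc (x k) (x (k + 1)), max 0 (-q t)) ≤ C₀) →
      ∃ C : ℝ, 0 ≤ C ∧ ∀ F : PW1 x, MemDomN x q F →
        formValN x q F ≥ -C * ∫ t in Ioi (0 : ℝ), F.f t ^ 2) ∧
    ((∀ᵐ t ∂(volume.restrict (Ioi (0 : ℝ))), q t ≤ 0) →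
      (∃ C : ℝ, 0 ≤ C ∧ ∀ F : PW1 x, MemDomN x q F →
        formValN x q F ≥ -C * ∫ t in Ioi (0 : ℝ), F.f t ^ 2) →
      ∃ C₀ : ℝ, ∀ k, (1 / (x (k + 1) - x k)) *
        (∫ t in Icc (x k) (x (k + 1)), max 0 (-q t)) ≤ C₀) :=
  ⟨neumannFormLowerSemibounded_of_meanNegPartBounded hx0 hmono hxtop hq hD,
    meanNegPartBounded_of_neumannFormLowerSemibounded hx0 hmono hq⟩

end
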